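/- Let G be a beer graph satisfying the generalized triangle inequality, let s, c, a, b be vertices such that (a,c) and (b,c) are edges of G and every walk in G from s to c visits a or b. Then dist_B(s,c) is the minimum of the four quantities: dist(s,a) + dist_B(a,c); dist_B(s,a) + ω(a,c); dist(s,b) + dist_B(b,c); and dist_B(s,b) + ω(b,c). -/

import Mathlib

open scoped ENNReal

/-- The weight of a walk: the sum, with multiplicity, of the weights of its edges. -/
noncomputable def walkWeight {V : Type*} (ω : V → V → ℝ≥0∞) {G : SimpleGraph V}
    {u v : V} (p : G.Walk u v) : ℝ≥0∞ :=
  (p.darts.map fun d => ω d.toProd.1 d.toProd.2).sum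

/-- The (weighted) distance: the infimum in ℝ≥0∞ of the weights of all walks. -/
noncomputable def gDist {V : Type*} (G : SimpleGraph V) (ω : V → V → ℝ≥0∞) (u v : V) : ℝ≥0∞ :=
  ⨅ p : G.Walk u v, walkWeight ω p

/-- The beer distance: the infimum in ℝ≥0∞ of the weights of all walks visiting
a vertex of `B`. -/
noncomputable def beerDist {V : Type*} (G : SimpleGraph V) (ω : V → V → ℝ≥0∞)
    (B : Set V) (u v : V) : ℝ≥0∞ :=
  ⨅ (p : G.Walk u v) (_ : ∃ b ∈ B, b ∈ p.support), walkWeight ω p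

/-! Cutting a beer walk from `s` to `c` at the vertex `m ∈ {a, b}` it must visit, the beer store
lies on the part before `m` or on the part after it, so its weight is at least
`dist_B(s,m) + dist(m,c)` or `dist(s,m) + dist_B(m,c)`; concatenating walks gives the converse
bounds. The generalized triangle inequality turns `dist(m,c)` into `ω(m,c)` on the edge `mc`. -/

open SimpleGraph

section

variable {V : Type*} {G : SimpleGraph V} (ω : V → V → ℝ≥0∞) {B : Set V}

lemma walkWeight_append {u v w : V} (p : G.Walk u v) (q : G.Walk v w) :
    walkWeight ω (p.append q) = walkWeight ω p + walkWeight ω q := by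
  simp [walkWeight, Walk.darts_append]

lemma gDist_le_walkWeight {u v : V} (p : G.Walk u v) : gDist G ω u v ≤ walkWeight ω p :=
  iInf_le _ p

lemma beerDist_le_walkWeight {u v : V} (p : G.Walk u v) (hp : ∃ x ∈ B, x ∈ p.support) :
    beerDist G ω B u v ≤ walkWeight ω p :=
  iInf₂_le p hp

lemma beerDist_eq_iInf_subtype (u v : V) :
    beerDist G ω B u v =
      ⨅ p : {p : G.Walk u v // ∃ x ∈ B, x ∈ p.support}, walkWeight ω p.1 :=
  iInf_subtype'

lemma beerDist_le_gDist_add_beerDist (u m v : V) :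
    beerDist G ω B u v ≤ gDist G ω u m + beerDist G ω B m v := by
  rw [beerDist_eq_iInf_subtype ω m v]
  refine ENNReal.le_iInf_add_iInf fun p ⟨q, x, hxB, hxq⟩ => ?_
  rw [← walkWeight_append]
  exact beerDist_le_walkWeight ω _ ⟨x, hxB, (p.mem_support_append_iff q).2 (Or.inr hxq)⟩

lemma beerDist_le_beerDist_add_gDist (u m v : V) :
    beerDist G ω B u v ≤ beerDist G ω B u m + gDist G ω m v := by
  rw [beerDist_eq_iInf_subtype ω u m]
  refine ENNReal.le_iInf_add_iInf fun ⟨p, x, hxB, hxp⟩ q => ?_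
  rw [← walkWeight_append]
  exact beerDist_le_walkWeight ω _ ⟨x, hxB, (p.mem_support_append_iff q).2 (Or.inl hxp)⟩

lemma beerDist_le_min_through (u m v : V) :
    beerDist G ω B u v ≤
      min (gDist G ω u m + beerDist G ω B m v) (beerDist G ω B u m + gDist G ω m v) :=
  le_min (beerDist_le_gDist_add_beerDist ω u m v) (beerDist_le_beerDist_add_gDist ω u m v)

lemma min_through_le_walkWeight {u m v : V} (p : G.Walk u v) (hp : ∃ x ∈ B, x ∈ p.support)
    (hm : m ∈ p.support) :
    min (gDist G ω u m + beerDist G ω B m v) (beerDist G ω B u m + gDist G ω m v) ≤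
      walkWeight ω p := by
  classical
  obtain ⟨x, hxB, hxp⟩ := hp
  rw [← p.take_spec hm] at hxp ⊢
  rw [walkWeight_append]
  rcases (Walk.mem_support_append_iff _ _).1 hxp with hx | hx
  · exact min_le_of_right_le (add_le_add (beerDist_le_walkWeight ω _ ⟨x, hxB, hx⟩)
      (gDist_le_walkWeight ω _))
  · exact min_le_of_left_le (add_le_add (gDist_le_walkWeight ω _)
      (beerDist_le_walkWeight ω _ ⟨x, hxB, hx⟩))

end

theorem beerDist_single_source_recurrence_general {V : Type*}
    (G : SimpleGraph V) (ω : V → V → ℝ≥0∞) (B : Set V)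
    (hgti : ∀ a b, G.Adj a b → gDist G ω a b = ω a b)
    (s c a b : V)
    (hac : G.Adj a c) (hbc : G.Adj b c)
    (hvisit : ∀ p : G.Walk s c, a ∈ p.support ∨ b ∈ p.support) :
    beerDist G ω B s c =
      min (min (gDist G ω s a + beerDist G ω B a c) (beerDist G ω B s a + ω a c))
          (min (gDist G ω s b + beerDist G ω B b c) (beerDist G ω B s b + ω b c)) := by
  rw [← hgti a c hac, ← hgti b c hbc]
  refine le_antisymm (le_min (beerDist_le_min_through ω s a c) (beerDist_le_min_through ω s b c))
    (le_iInf₂ fun p hp => ?_)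
  rcases hvisit p with ha | hb
  · exact min_le_of_left_le (min_through_le_walkWeight ω p hp ha)
  · exact min_le_of_right_le (min_through_le_walkWeight ω p hp hb)

/-- In a beer graph satisfying the generalized triangle inequality,
if (a,c) and (b,c) are edges and every walk from s to c visits a or b, then the
beer distance from s to c is the minimum of the four listed quantities. -/
theorem beerDist_single_source_recurrence {V : Type*} [Fintype V] [DecidableEq V]
    (G : SimpleGraph V) (ω : V → V → ℝ≥0∞) (B : Set V)
    (hsymm : ∀ a b, ω a b = ω b a)
    (hpos : ∀ a b, G.Adj a b → 0 < ω a b ∧ ω a b < ⊤)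
    (hgti : ∀ a b, G.Adj a b → gDist G ω a b = ω a b)
    (s c a b : V)
    (hac : G.Adj a c) (hbc : G.Adj b c)
    (hvisit : ∀ p : G.Walk s c, a ∈ p.support ∨ b ∈ p.support) :
    beerDist G ω B s c =
      min (min (gDist G ω s a + beerDist G ω B a c) (beerDist G ω B s a + ω a c))
          (min (gDist G ω s b + beerDist G ω B b c) (beerDist G ω B s b + ω b c)) :=
  beerDist_single_source_recurrence_general G ω B hgti s c a b hac hbc hvisit
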